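/- In the partition setting under Assumptions (D), (M) and (B), let p ≥ 1 with α·γ^{2p−2} < 1, and suppose δ(p) ≥ 1 is such that ‖q̂_{j,k}(f)‖_{j,i,p} ≤ M_{j,k}(i)·δ(p)·max_{l∈s_k(i)} ‖f‖_{k,l,p} for all 1 ≤ j < k ≤ n, i ∈ I_j and bounded measurable f. Then, with δ(2p) = δ(p)·γ^{1−1/p}/(1 − α·γ^{2p−2})^{1/(2p)}, one has ‖q̂_{j,k}(f)‖_{j,i,2p} ≤ M_{j,k}(i)·δ(2p)·max_{l∈s_k(i)} ‖f‖_{k,l,2p} for all such j, k, i, f; consequently ‖q̂_{j,k}(f)‖_{j,2p} ≤ A_{j,k}·δ(2p)·‖f‖_{k,2p}. -/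

import Mathlib

/-!
The bound is proved by downward induction on `j`, one level of the partition at a time.
Write `q̂_{j,k} f = q̂_{j,j+1} h` with `h = q̂_{j+1,k} f`. On a cell `F_j(i)` the kernel `K_j`
stays inside the cell (D) and the normalized density is at most `γ m_{j,j+1}(i)` there (B), so
Jensen's inequality gives `|q̂_{j,j+1} h|^p ≤ (γ m)^{p-1} q̂_{j,j+1}(|h|^p)` pointwise. Squaring and
applying the L²-estimate (M) to `|h|^p` bounds `‖q̂_{j,j+1} h‖_{2p}^{2p}` by
`γ^{2p-2} m^{2p} (α ‖h‖_{2p}^{2p} + β ‖h‖_p^{2p})`, the norms of `h` being taken on the children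
of `F_j(i)`. The `L^{2p}`-term is controlled by the induction hypothesis, the `L^p`-term by the
assumed bound with constant `δ(p)`, and `δ(2p)` is exactly the constant for which
`γ^{2p-2} (α δ(2p)^{2p} + β δ(p)^{2p}) ≤ δ(2p)^{2p}`.
-/

open MeasureTheory

variable {E : Type} [MeasurableSpace E]
variable {I : ℕ → Type} [∀ k, Fintype (I k)] [∀ k, Nonempty (I k)] [∀ k, DecidableEq (I k)]

/-- The restricted (normalized) measure μ_{k,j}: the restriction of `μ` to the
partition element `S`, normalized to a probability measure. -/
noncomputable def muLoc (μ : Measure E) (S : Set E) : Measure E := (μ S)⁻¹ • μ.restrict S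

/-- The local L_p-norm ‖f‖_{k,j,p} = μ_{k,j}(|f|^p)^{1/p}. -/
noncomputable def locNorm (ν : Measure E) (p : ℝ) (f : E → ℝ) : ℝ :=
  (∫ x, |f x| ^ p ∂ν) ^ (1/p)

/-- The norm ‖f‖_{k,p} = max_{j ∈ I_k} ‖f‖_{k,j,p}. -/
noncomputable def maxNorm (μ : ℕ → Measure E) (F : ∀ k, I k → Set E) (k : ℕ) (p : ℝ)
    (f : E → ℝ) : ℝ :=
  Finset.univ.sup' Finset.univ_nonempty fun j : I k => locNorm (muLoc (μ k) (F k j)) p f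

/-- The relative mass change m_{k,k+1}(j) = μ_{k+1}(F_j)/μ_k(F_j). -/
noncomputable def mRatio (μ : ℕ → Measure E) (F : ∀ k, I k → Set E) (k : ℕ) (j : I k) : ℝ :=
  (μ (k+1) (F k j)).toReal / (μ k (F k j)).toReal

/-- The successor set s_k(i) = {l ∈ I_k | p_j(l) = i} of i ∈ I_j. -/
def succSet (p : ∀ j k : ℕ, I k → I j) (j k : ℕ) (i : I j) : Finset (I k) :=
  Finset.univ.filter fun l => p j k l = i

/-- The product Π_{r=j}^{k-1} m_{r,r+1}(p_r(l)) of relative mass changes along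
the branch leading to l ∈ I_k; its maximum over l ∈ s_k(i) is M_{j,k}(i). -/
noncomputable def Mprod (μ : ℕ → Measure E) (F : ∀ k, I k → Set E) (p : ∀ j k : ℕ, I k → I j)
    (j k : ℕ) (l : I k) : ℝ :=
  ∏ r ∈ Finset.Ico j k, mRatio μ F r (p r k l)

/-- The propagator q_{j,k}(f) = ḡ_{j,j+1}·q̂_{j+1,k}(K_k(f)). -/
noncomputable def qFull (μ : ℕ → Measure E) (g : ℕ → E → ℝ) (K : ℕ → E → Measure E)
    (qhat : ℕ → ℕ → (E → ℝ) → E → ℝ) (j k : ℕ) (f : E → ℝ) : E → ℝ :=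
  fun x => (g j x / (∫ z, g j z ∂(μ j))) * qhat (j+1) k (fun y => ∫ z, f z ∂(K k y)) x

/-- The constant δ(2^r) = Π_{t=1}^{r} γ^{1-2^{-(t-1)}}/(1-α·γ^{2^t-2})^{2^{-t}}. -/
noncomputable def deltaP (α γ : ℝ) (r : ℕ) : ℝ :=
  ∏ t ∈ Finset.Icc 1 r,
    γ ^ (1 - (2:ℝ) ^ (1 - (t:ℝ))) / (1 - α * γ ^ ((2:ℝ) ^ t - 2)) ^ ((2:ℝ) ^ (-(t:ℝ)))

open scoped ENNReal

lemma abs_rpow_le_of_abs_le {α : Type*} {v : α → ℝ} {C p : ℝ} (hv : ∀ x, |v x| ≤ C) (hp : 0 ≤ p)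
    (x : α) : |(|v x| ^ p)| ≤ |C| ^ p := by
  rw [abs_of_nonneg (by positivity)]
  exact Real.rpow_le_rpow (abs_nonneg _) ((hv x).trans (le_abs_self _)) hp

lemma abs_mul_le_of_abs_le {α : Type*} {v w : α → ℝ} {Cv Cw : ℝ} (hv : ∀ y, |v y| ≤ Cv)
    (hw : ∀ y, |w y| ≤ Cw) (y : α) : |v y * w y| ≤ Cv * Cw := by
  rw [abs_mul]
  exact mul_le_mul (hv y) (hw y) (abs_nonneg _) ((abs_nonneg _).trans (hv y))

lemma mul_rpow_sub_one_mul_sub_le_rpow {a t p : ℝ} (ha : 0 < a) (ht : 0 ≤ t) (hp : 1 ≤ p) :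
    p * a ^ (p - 1) * t - (p - 1) * a ^ p ≤ t ^ p := by
  have h := one_add_mul_self_le_rpow_one_add (s := t / a - 1) (by linarith [div_nonneg ht ha.le]) hp
  rw [add_sub_cancel, Real.div_rpow ht ha.le, le_div_iff₀ (by positivity)] at h
  rw [Real.rpow_sub_one ha.ne']
  exact le_of_eq_of_le (by ring) h

lemma mul_le_mul_mul_of_le_mul_mul {m a M₁ M d X₁ X : ℝ} (hm : 0 ≤ m) (hM₁ : 0 ≤ M₁)
    (hd : 0 ≤ d) (hX₁ : 0 ≤ X₁) (ha : a ≤ M₁ * d * X₁) (hM : m * M₁ ≤ M) (hX : X₁ ≤ X) :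
    m * a ≤ d * (M * X) :=
  calc m * a ≤ m * (M₁ * d * X₁) := mul_le_mul_of_nonneg_left ha hm
    _ = (m * M₁) * (d * X₁) := by ring
    _ ≤ M * (d * X) := mul_le_mul hM (by gcongr) (by positivity) ((mul_nonneg hm hM₁).trans hM)
    _ = d * (M * X) := by ring

lemma integrable_of_abs_le {ν : Measure E} [IsFiniteMeasure ν] {v : E → ℝ} (hv : Measurable v)
    {C : ℝ} (hC : ∀ x, |v x| ≤ C) : Integrable v ν :=
  Integrable.of_bound hv.aestronglyMeasurable C (ae_of_all _ fun x => by simpa using hC x)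

/-- Jensen's inequality for `t ↦ t ^ p` against the weight `w • κ` of total mass at most `c`. -/
lemma abs_integral_mul_rpow_le {κ : Measure E} {w u : E → ℝ} {p c : ℝ} (hw : ∀ x, 0 ≤ w x)
    (hwi : Integrable w κ) (hwu : Integrable (fun x => w x * u x) κ)
    (hwup : Integrable (fun x => w x * |u x| ^ p) κ) (hc : 0 < c)
    (hwc : ∫ x, w x ∂κ ≤ c) (hp : 1 ≤ p) :
    |∫ x, w x * u x ∂κ| ^ p ≤ c ^ (p - 1) * ∫ x, w x * |u x| ^ p ∂κ := by
  have hwabs : ∀ x, |w x * u x| = w x * |u x| := fun x => by rw [abs_mul, abs_of_nonneg (hw x)]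
  set A := ∫ x, w x * |u x| ∂κ
  set B := ∫ x, w x * |u x| ^ p ∂κ
  have hA : |∫ x, w x * u x ∂κ| ≤ A :=
    abs_integral_le_integral_abs.trans_eq (integral_congr_ae (ae_of_all _ hwabs))
  have hA0 : 0 ≤ A := (abs_nonneg _).trans hA
  have hB0 : 0 ≤ B := integral_nonneg fun x => by have := hw x; positivity
  refine (Real.rpow_le_rpow (abs_nonneg _) hA (by linarith : (0 : ℝ) ≤ p)).trans ?_
  rcases hA0.eq_or_lt with hA0 | hA0
  · rw [← hA0, Real.zero_rpow (by linarith)]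
    positivity
  -- integrate the tangent line of `t ↦ t ^ p` at `a = A / c` against `w`
  set a := A / c
  have ha : 0 < a := div_pos hA0 hc
  have hAac : A = a * c := (div_mul_cancel₀ A hc.ne').symm
  have htangent : p * a ^ (p - 1) * A - (p - 1) * a ^ p * ∫ x, w x ∂κ ≤ B := by
    have hwau : Integrable (fun x => w x * |u x|) κ := hwu.abs.congr (ae_of_all _ hwabs)
    rw [← integral_const_mul, ← integral_const_mul, ← integral_sub (hwau.const_mul _)
      (hwi.const_mul _)]
    refine integral_mono ((hwau.const_mul _).sub (hwi.const_mul _)) hwup fun x => ?_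
    have := mul_le_mul_of_nonneg_left
      (mul_rpow_sub_one_mul_sub_le_rpow ha (abs_nonneg (u x)) hp) (hw x)
    simp only
    linarith
  have hpa : 0 ≤ (p - 1) * a ^ p := mul_nonneg (by linarith) (by positivity)
  have hA' : a ^ (p - 1) * A = a ^ p * c := by
    rw [hAac, Real.rpow_sub_one ha.ne']
    field_simp
  have key : a ^ p * c ≤ B := by
    rw [mul_assoc p, hA'] at htangent
    linarith [mul_le_mul_of_nonneg_left hwc hpa]
  calc A ^ p = c ^ (p - 1) * (a ^ p * c) := by
        rw [hAac, Real.mul_rpow ha.le hc.le, Real.rpow_sub_one hc.ne']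
        field_simp
    _ ≤ c ^ (p - 1) * B := mul_le_mul_of_nonneg_left key (by positivity)

lemma locNorm_nonneg (ν : Measure E) (q : ℝ) (f : E → ℝ) : 0 ≤ locNorm ν q f :=
  Real.rpow_nonneg (integral_nonneg fun _ => by positivity) _

lemma locNorm_rpow (ν : Measure E) {q : ℝ} (hq : q ≠ 0) (f : E → ℝ) :
    locNorm ν q f ^ q = ∫ x, |f x| ^ q ∂ν := by
  rw [locNorm, ← Real.rpow_mul (integral_nonneg fun _ => by positivity), one_div_mul_cancel hq,
    Real.rpow_one]

lemma locNorm_eq_toReal_eLpNorm {ν : Measure E} {q : ℝ} (hq : 0 < q) {f : E → ℝ}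
    (hf : MemLp f (ENNReal.ofReal q) ν) :
    locNorm ν q f = (eLpNorm f (ENNReal.ofReal q) ν).toReal := by
  rw [hf.eLpNorm_eq_integral_rpow_norm (by simpa using hq) ENNReal.ofReal_ne_top,
    ENNReal.toReal_ofReal (by positivity), ENNReal.toReal_ofReal hq.le, locNorm, one_div]
  simp only [Real.norm_eq_abs]

lemma locNorm_le_locNorm_of_exponent_le {ν : Measure E} [IsProbabilityMeasure ν] {q r : ℝ}
    (hq : 0 < q) (hqr : q ≤ r) {f : E → ℝ} (hf : MemLp f (ENNReal.ofReal r) ν) :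
    locNorm ν q f ≤ locNorm ν r f := by
  rw [locNorm_eq_toReal_eLpNorm hq (hf.mono_exponent (ENNReal.ofReal_le_ofReal hqr)),
    locNorm_eq_toReal_eLpNorm (hq.trans_le hqr) hf]
  exact ENNReal.toReal_mono hf.eLpNorm_ne_top
    (eLpNorm_le_eLpNorm_of_exponent_le (ENNReal.ofReal_le_ofReal hqr) hf.1)

lemma isProbabilityMeasure_muLoc {ν : Measure E} {S : Set E} (h0 : ν S ≠ 0) (htop : ν S ≠ ∞) :
    IsProbabilityMeasure (muLoc ν S) :=
  ⟨by rw [muLoc, Measure.smul_apply, Measure.restrict_apply_univ, smul_eq_mul,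
    ENNReal.inv_mul_cancel h0 htop]⟩

lemma ae_muLoc_mem {ν : Measure E} {S : Set E} (hS : MeasurableSet S) : ∀ᵐ x ∂muLoc ν S, x ∈ S :=
  Measure.ae_smul_measure (ae_restrict_mem hS) _

lemma locNorm_muLoc_le_of_exponent_le {ν : Measure E} [IsFiniteMeasure ν] {S : Set E}
    (hS : ν S ≠ 0) {q r : ℝ} (hq : 0 < q) (hqr : q ≤ r) {f : E → ℝ} (hf : Measurable f)
    (hfb : ∃ C : ℝ, ∀ x, |f x| ≤ C) :
    locNorm (muLoc ν S) q f ≤ locNorm (muLoc ν S) r f := by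
  have := isProbabilityMeasure_muLoc hS (measure_ne_top ν S)
  obtain ⟨C, hC⟩ := hfb
  exact locNorm_le_locNorm_of_exponent_le hq hqr
    (MemLp.of_bound hf.aestronglyMeasurable C (ae_of_all _ fun x => by simpa using hC x))

lemma integral_muLoc (ν : Measure E) (S : Set E) (f : E → ℝ) :
    ∫ x, f x ∂muLoc ν S = (ν.real S)⁻¹ * ∫ x in S, f x ∂ν := by
  rw [muLoc, integral_smul_measure, ENNReal.toReal_inv, smul_eq_mul, measureReal_def]

lemma integral_muLoc_biUnion_le_sup' {ν : Measure E} [IsFiniteMeasure ν] {ι : Type*}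
    {s : Finset ι} (hs : s.Nonempty) {T : ι → Set E} (hT : ∀ l ∈ s, MeasurableSet (T l))
    (hdisj : (s : Set ι).PairwiseDisjoint T) (hT0 : ∀ l ∈ s, ν (T l) ≠ 0) {f : E → ℝ}
    (hf : IntegrableOn f (⋃ l ∈ s, T l) ν) :
    ∫ x, f x ∂muLoc ν (⋃ l ∈ s, T l) ≤ s.sup' hs fun l => ∫ x, f x ∂muLoc ν (T l) := by
  set M := s.sup' hs fun l => ∫ x, f x ∂muLoc ν (T l)
  have hcell : ∀ l ∈ s, ∫ x in T l, f x ∂ν ≤ ν.real (T l) * M := fun l hl => by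
    have hpos : 0 < ν.real (T l) := ENNReal.toReal_pos (hT0 l hl) (measure_ne_top _ _)
    rw [← div_le_iff₀' hpos, div_eq_inv_mul, ← integral_muLoc]
    exact Finset.le_sup' (fun l => ∫ x, f x ∂muLoc ν (T l)) hl
  obtain ⟨l₀, hl₀⟩ := hs
  have hpos : 0 < ν.real (⋃ l ∈ s, T l) := by
    rw [measureReal_biUnion_finset hdisj hT]
    exact Finset.sum_pos' (fun _ _ => measureReal_nonneg)
      ⟨l₀, hl₀, ENNReal.toReal_pos (hT0 l₀ hl₀) (measure_ne_top _ _)⟩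
  rw [integral_muLoc, inv_mul_le_iff₀ hpos,
    integral_biUnion_finset s hT hdisj fun l hl => hf.mono_set (Set.subset_biUnion_of_mem hl),
    measureReal_biUnion_finset hdisj hT, Finset.sum_mul]
  exact Finset.sum_le_sum hcell

lemma locNorm_muLoc_biUnion_le_sup' {ν : Measure E} [IsFiniteMeasure ν] {ι : Type*}
    {s : Finset ι} (hs : s.Nonempty) {T : ι → Set E} (hT : ∀ l ∈ s, MeasurableSet (T l))
    (hdisj : (s : Set ι).PairwiseDisjoint T) (hT0 : ∀ l ∈ s, ν (T l) ≠ 0) {q : ℝ} (hq : 0 < q)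
    {f : E → ℝ} (hf : IntegrableOn (fun x => |f x| ^ q) (⋃ l ∈ s, T l) ν) :
    locNorm (muLoc ν (⋃ l ∈ s, T l)) q f ≤ s.sup' hs fun l => locNorm (muLoc ν (T l)) q f := by
  obtain ⟨l, hl, hmax⟩ :=
    Finset.exists_mem_eq_sup' hs fun l => ∫ x, |f x| ^ q ∂muLoc ν (T l)
  calc locNorm (muLoc ν (⋃ l ∈ s, T l)) q f ≤ locNorm (muLoc ν (T l)) q f := by
        refine Real.rpow_le_rpow (integral_nonneg fun _ => by positivity) ?_ (by positivity)
        exact hmax ▸ integral_muLoc_biUnion_le_sup' ⟨l, hl⟩ hT hdisj hT0 hf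
    _ ≤ _ := Finset.le_sup' (fun l => locNorm (muLoc ν (T l)) q f) hl

lemma locNorm_two_sq (ν : Measure E) (f : E → ℝ) :
    locNorm ν 2 f ^ 2 = ∫ x, f x ^ 2 ∂ν := by
  rw [← Real.rpow_two, locNorm_rpow ν two_ne_zero]
  simp only [Real.rpow_two, sq_abs]

lemma locNorm_two_abs_rpow_sq (ν : Measure E) {p : ℝ} (hp : p ≠ 0) (f : E → ℝ) :
    locNorm ν 2 (fun x => |f x| ^ p) ^ 2 = locNorm ν (2 * p) f ^ (2 * p) := by
  rw [locNorm_two_sq, locNorm_rpow ν (mul_ne_zero two_ne_zero hp)]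
  simp only [← Real.rpow_natCast, ← Real.rpow_mul (abs_nonneg _), Nat.cast_ofNat, mul_comm p 2]

lemma integral_abs_rpow_sq (ν : Measure E) {p : ℝ} (hp : p ≠ 0) (f : E → ℝ) :
    (∫ x, |f x| ^ p ∂ν) ^ 2 = locNorm ν p f ^ (2 * p) := by
  rw [mul_comm, Real.rpow_mul (locNorm_nonneg ν p f), locNorm_rpow ν hp, Real.rpow_two]

lemma locNorm_rpow_le_of_abs_rpow_le {ν : Measure E} {v ψ : E → ℝ} {p C : ℝ} (hp : 0 < p)
    (hvψ : ∀ᵐ x ∂ν, |v x| ^ p ≤ C * ψ x) (hψ : Integrable (fun x => ψ x ^ 2) ν) :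
    locNorm ν (2 * p) v ^ (2 * p) ≤ C ^ 2 * locNorm ν 2 ψ ^ 2 := by
  rw [locNorm_rpow ν (by positivity), locNorm_two_sq, ← integral_const_mul]
  refine integral_mono_of_nonneg (ae_of_all _ fun _ => by positivity) (hψ.const_mul _) ?_
  filter_upwards [hvψ] with x hx
  rw [mul_comm 2 p, Real.rpow_mul (abs_nonneg _), Real.rpow_two, ← mul_pow]
  exact pow_le_pow_left₀ (by positivity) hx 2

section Kernel

variable {K : E → Measure E}

lemma measurable_integral_of_measurable_coe
    (hK : ∀ A, MeasurableSet A → Measurable fun x => K x A) {v : E → ℝ} (hv : Measurable v) :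
    Measurable fun x => ∫ y, v y ∂K x :=
  (hv.stronglyMeasurable.integral_kernel
    (κ := ⟨K, Measure.measurable_of_measurable_coe K hK⟩)).measurable

lemma abs_integral_le_of_abs_le [∀ x, IsProbabilityMeasure (K x)] {v : E → ℝ} {C : ℝ}
    (hv : ∀ y, |v y| ≤ C) (x : E) : |∫ y, v y ∂K x| ≤ C := by
  simpa using norm_integral_le_of_norm_le_const (μ := K x) (f := v) (ae_of_all _ hv)

/-- Jensen's inequality in each `K x`, where `w` has mass at most `c`, gives
`|T h|^p ≤ c^{p-1} T (|h|^p)`; the L²-bound for `T` applied to `|h|^p` then controls the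
`L^{2p}`-norm of `T h`. -/
lemma locNorm_rpow_le_of_sq_bound {ν₀ ν₁ : Measure E} [IsFiniteMeasure ν₀]
    [∀ x, IsProbabilityMeasure (K x)] (hK : ∀ A, MeasurableSet A → Measurable fun x => K x A)
    {w : E → ℝ} (hwm : Measurable w) (hw0 : ∀ y, 0 ≤ w y) {Cw : ℝ} (hwb : ∀ y, w y ≤ Cw)
    {c : ℝ} (hc : 0 < c) (hwc : ∀ᵐ x ∂ν₀, ∀ᵐ y ∂K x, w y ≤ c)
    {T : (E → ℝ) → E → ℝ} (hT : ∀ u x, T u x = ∫ y, w y * u y ∂K x)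
    {m a b : ℝ} (hL2 : ∀ f : E → ℝ, Measurable f → (∃ C : ℝ, ∀ x, |f x| ≤ C) →
      locNorm ν₀ 2 (T f) ^ 2 ≤ m ^ 2 * (a * locNorm ν₁ 2 f ^ 2 + b * (∫ x, f x ∂ν₁) ^ 2))
    {p : ℝ} (hp : 1 ≤ p) {h : E → ℝ} (hh : Measurable h) {Ch : ℝ} (hhb : ∀ x, |h x| ≤ Ch) :
    locNorm ν₀ (2 * p) (T h) ^ (2 * p)
      ≤ c ^ (2 * p - 2) * m ^ 2 * (a * locNorm ν₁ (2 * p) h ^ (2 * p)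
        + b * locNorm ν₁ p h ^ (2 * p)) := by
  have hp0 : p ≠ 0 := by positivity
  set φ : E → ℝ := fun y => |h y| ^ p
  have hwb' : ∀ y, |w y| ≤ Cw := fun y => (abs_of_nonneg (hw0 y)).trans_le (hwb y)
  have hφb : ∀ y, |φ y| ≤ |Ch| ^ p := abs_rpow_le_of_abs_le hhb (by positivity)
  have hφm : Measurable φ := hh.abs.pow_const p
  have hTφ : Measurable (T φ) := by
    rw [funext (hT φ)]
    exact measurable_integral_of_measurable_coe hK (hwm.mul hφm)
  have hTφb : ∀ x, |T φ x| ≤ Cw * |Ch| ^ p := fun x => by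
    rw [hT]
    exact abs_integral_le_of_abs_le (abs_mul_le_of_abs_le hwb' hφb) x
  have hjensen : ∀ᵐ x ∂ν₀, |T h x| ^ p ≤ c ^ (p - 1) * T φ x := by
    filter_upwards [hwc] with x hx
    have hwi : Integrable w (K x) := integrable_of_abs_le hwm hwb'
    rw [hT, hT]
    refine abs_integral_mul_rpow_le hw0 hwi
      (integrable_of_abs_le (hwm.mul hh) (abs_mul_le_of_abs_le hwb' hhb))
      (integrable_of_abs_le (hwm.mul hφm) (abs_mul_le_of_abs_le hwb' hφb)) hc ?_ hp
    exact (integral_mono_ae hwi (integrable_const c) hx).trans_eq (by simp)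
  have hsq : Integrable (fun x => T φ x ^ 2) ν₀ :=
    integrable_of_abs_le (hTφ.pow_const 2) fun x => by
      simpa [sq_abs] using pow_le_pow_left₀ (abs_nonneg _) (hTφb x) 2
  calc locNorm ν₀ (2 * p) (T h) ^ (2 * p)
      ≤ (c ^ (p - 1)) ^ 2 * locNorm ν₀ 2 (T φ) ^ 2 :=
        locNorm_rpow_le_of_abs_rpow_le (by positivity) hjensen hsq
    _ ≤ (c ^ (p - 1)) ^ 2 * (m ^ 2 * (a * locNorm ν₁ 2 φ ^ 2 + b * (∫ y, φ y ∂ν₁) ^ 2)) := by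
        gcongr
        exact hL2 φ hφm ⟨_, hφb⟩
    _ = _ := by
        rw [locNorm_two_abs_rpow_sq ν₁ hp0, integral_abs_rpow_sq ν₁ hp0, ← Real.rpow_natCast,
          ← Real.rpow_mul hc.le]
        push_cast
        ring_nf

end Kernel

noncomputable def doubledDelta (α γ p δ : ℝ) : ℝ :=
  δ * γ ^ (1 - 1 / p) / (1 - α * γ ^ (2 * p - 2)) ^ (1 / (2 * p))

section doubledDelta

variable {α β γ p δ : ℝ}

lemma doubledDelta_rpow (hγ : 0 ≤ γ) (hp : p ≠ 0) (hsmall : α * γ ^ (2 * p - 2) < 1)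
    (hδ : 0 ≤ δ) :
    doubledDelta α γ p δ ^ (2 * p) = δ ^ (2 * p) * γ ^ (2 * p - 2) / (1 - α * γ ^ (2 * p - 2)) := by
  have h1 : 0 ≤ 1 - α * γ ^ (2 * p - 2) := by linarith
  rw [doubledDelta, Real.div_rpow (by positivity) (by positivity), Real.mul_rpow hδ (by positivity),
    ← Real.rpow_mul hγ, ← Real.rpow_mul h1, one_div_mul_cancel (by simpa using hp), Real.rpow_one]
  congr 3
  field_simp

lemma le_doubledDelta (hα : 0 ≤ α) (hγ : 1 ≤ γ) (hp : 1 ≤ p) (hsmall : α * γ ^ (2 * p - 2) < 1)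
    (hδ : 0 ≤ δ) : δ ≤ doubledDelta α γ p δ := by
  have hden : 0 < (1 - α * γ ^ (2 * p - 2)) ^ (1 / (2 * p)) := Real.rpow_pos_of_pos (by linarith) _
  have hden1 : (1 - α * γ ^ (2 * p - 2)) ^ (1 / (2 * p)) ≤ 1 :=
    Real.rpow_le_one (by linarith)
      (by linarith [mul_nonneg hα (by positivity : 0 ≤ γ ^ (2 * p - 2))]) (by positivity)
  have hγ1 : 1 ≤ γ ^ (1 - 1 / p) :=
    Real.one_le_rpow hγ (by rw [sub_nonneg, div_le_one (by linarith)]; exact hp)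
  rw [doubledDelta, le_div_iff₀ hden]
  linarith [mul_le_mul_of_nonneg_left hden1 hδ, mul_le_mul_of_nonneg_left hγ1 hδ]

lemma rpow_mul_add_le_doubledDelta_rpow (hβ1 : β ≤ 1) (hγ : 0 ≤ γ)
    (hp : p ≠ 0) (hsmall : α * γ ^ (2 * p - 2) < 1) (hδ : 0 ≤ δ) :
    γ ^ (2 * p - 2) * (α * doubledDelta α γ p δ ^ (2 * p) + β * δ ^ (2 * p))
      ≤ doubledDelta α γ p δ ^ (2 * p) := by
  have h1 : 0 < 1 - α * γ ^ (2 * p - 2) := by linarith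
  have hfix : γ ^ (2 * p - 2) * δ ^ (2 * p)
      = (1 - α * γ ^ (2 * p - 2)) * doubledDelta α γ p δ ^ (2 * p) := by
    rw [doubledDelta_rpow hγ hp hsmall hδ, mul_div_assoc', mul_div_cancel_left₀ _ h1.ne', mul_comm]
  have hβδ : β * δ ^ (2 * p) ≤ δ ^ (2 * p) :=
    mul_le_of_le_one_left (by positivity) hβ1
  linarith [hfix, mul_le_mul_of_nonneg_left hβδ (by positivity : 0 ≤ γ ^ (2 * p - 2))]

lemma le_doubledDelta_mul_of_rpow_le (hα : 0 ≤ α) (hβ0 : 0 ≤ β) (hβ1 : β ≤ 1) (hγ : 0 ≤ γ)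
    (hp : 0 < p) (hsmall : α * γ ^ (2 * p - 2) < 1) (hδ : 0 ≤ δ) {L A B Y : ℝ} (hL : 0 ≤ L)
    (hA : 0 ≤ A) (hB : 0 ≤ B) (hY : 0 ≤ Y) (hAY : A ≤ doubledDelta α γ p δ * Y)
    (hBY : B ≤ δ * Y) (hLAB : L ^ (2 * p) ≤ γ ^ (2 * p - 2) * (α * A ^ (2 * p) + β * B ^ (2 * p))) :
    L ≤ doubledDelta α γ p δ * Y := by
  have hp2 : 0 < 2 * p := by positivity
  have hδ2 : 0 ≤ doubledDelta α γ p δ :=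
    div_nonneg (by positivity) (by positivity)
  refine (Real.rpow_le_rpow_iff hL (by positivity) hp2).1 (hLAB.trans ?_)
  have hA' := Real.rpow_le_rpow hA hAY hp2.le
  have hB' := Real.rpow_le_rpow hB hBY hp2.le
  rw [Real.mul_rpow hδ2 hY] at hA' ⊢
  rw [Real.mul_rpow hδ hY] at hB'
  have hfix := rpow_mul_add_le_doubledDelta_rpow hβ1 hγ hp.ne' hsmall hδ
  calc γ ^ (2 * p - 2) * (α * A ^ (2 * p) + β * B ^ (2 * p))
      ≤ γ ^ (2 * p - 2) * (α * doubledDelta α γ p δ ^ (2 * p) + β * δ ^ (2 * p)) * Y ^ (2 * p) := by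
        rw [mul_assoc]
        gcongr
        linarith [mul_le_mul_of_nonneg_left hA' hα, mul_le_mul_of_nonneg_left hB' hβ0]
    _ ≤ doubledDelta α γ p δ ^ (2 * p) * Y ^ (2 * p) := by gcongr

end doubledDelta

section Tree

variable {μ : ℕ → Measure E} {F : ∀ k, I k → Set E} {p : ∀ j k : ℕ, I k → I j}

omit [∀ k, Nonempty (I k)]

lemma mem_succSet {j k : ℕ} {i : I j} {l : I k} : l ∈ succSet p j k i ↔ p j k l = i := by
  simp [succSet]

omit [∀ k, Fintype (I k)] [∀ k, DecidableEq (I k)] in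
lemma mRatio_nonneg (μ : ℕ → Measure E) (F : ∀ k, I k → Set E) (k : ℕ) (j : I k) :
    0 ≤ mRatio μ F k j :=
  div_nonneg ENNReal.toReal_nonneg ENNReal.toReal_nonneg

omit [∀ k, Fintype (I k)] [∀ k, DecidableEq (I k)] in
lemma Mprod_nonneg (j k : ℕ) (l : I k) : 0 ≤ Mprod μ F p j k l :=
  Finset.prod_nonneg fun _ _ => mRatio_nonneg μ F _ _

lemma sup'_Mprod_nonneg {j k : ℕ} {i : I j} (hs : (succSet p j k i).Nonempty) :
    0 ≤ (succSet p j k i).sup' hs (Mprod μ F p j k) :=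
  let ⟨_, hl⟩ := hs
  Finset.le_sup'_of_le _ hl (Mprod_nonneg _ _ _)

omit [∀ k, Fintype (I k)] [∀ k, DecidableEq (I k)] in
lemma Mprod_eq_mRatio_mul {j k : ℕ} (hjk : j < k) (l : I k) :
    Mprod μ F p j k l = mRatio μ F j (p j k l) * Mprod μ F p (j + 1) k l :=
  Finset.prod_eq_prod_Ico_succ_bot hjk _

lemma sup'_Mprod_succ {j : ℕ} {i : I j} (hs : (succSet p j (j + 1) i).Nonempty) :
    (succSet p j (j + 1) i).sup' hs (Mprod μ F p j (j + 1)) = mRatio μ F j i := by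
  obtain ⟨l, hl, hmax⟩ := Finset.exists_mem_eq_sup' hs (Mprod μ F p j (j + 1))
  rw [hmax, Mprod_eq_mRatio_mul j.lt_succ_self, mem_succSet.1 hl, Mprod, Finset.Ico_self,
    Finset.prod_empty, mul_one]

lemma succSet_subset_succSet {j k : ℕ} (hpc : ∀ l : I k, p j k l = p j (j + 1) (p (j + 1) k l))
    {i : I j} {l₁ : I (j + 1)} (hl₁ : l₁ ∈ succSet p j (j + 1) i) :
    succSet p (j + 1) k l₁ ⊆ succSet p j k i := fun l hl => by
  rw [mem_succSet] at hl hl₁ ⊢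
  rw [hpc, hl, hl₁]

lemma mRatio_mul_sup'_Mprod_le {j k : ℕ} (hjk : j < k)
    (hpc : ∀ l : I k, p j k l = p j (j + 1) (p (j + 1) k l)) {i : I j} {l₁ : I (j + 1)}
    (hl₁ : l₁ ∈ succSet p j (j + 1) i) (hs₁ : (succSet p (j + 1) k l₁).Nonempty)
    (hs : (succSet p j k i).Nonempty) :
    mRatio μ F j i * (succSet p (j + 1) k l₁).sup' hs₁ (Mprod μ F p (j + 1) k)
      ≤ (succSet p j k i).sup' hs (Mprod μ F p j k) := by
  obtain ⟨l, hl, hmax⟩ := Finset.exists_mem_eq_sup' hs₁ (Mprod μ F p (j + 1) k)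
  have hl' := succSet_subset_succSet hpc hl₁ hl
  rw [hmax]
  calc _ = Mprod μ F p j k l := by rw [Mprod_eq_mRatio_mul hjk, mem_succSet.1 hl']
    _ ≤ _ := Finset.le_sup' _ hl'

omit [MeasurableSpace E] [∀ k, Fintype (I k)] [∀ k, DecidableEq (I k)] in
lemma pred_eq_pred_succ_pred {n j k : ℕ} (hjk : j + 1 < k) (hkn : k ≤ n)
    (hp : ∀ j k, j < k → k ≤ n → ∀ l : I k, F k l ⊆ F j (p j k l))
    (hdisj : ∀ a b : I j, a ≠ b → Disjoint (F j a) (F j b)) {l : I k} (hl : (F k l).Nonempty) :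
    p j k l = p j (j + 1) (p (j + 1) k l) := by
  obtain ⟨x, hx⟩ := hl
  refine Set.PairwiseDisjoint.elim_set (s := Set.univ) (fun a _ b _ => hdisj a b) trivial trivial
    x (hp j k (by omega) hkn l hx) ?_
  exact hp j (j + 1) j.lt_succ_self (by omega) _ (hp (j + 1) k hjk hkn l hx)

omit [MeasurableSpace E] in
lemma cell_eq_biUnion_succSet {j k : ℕ} (hcover : ⋃ l : I k, F k l = Set.univ)
    (hp : ∀ l : I k, F k l ⊆ F j (p j k l))
    (hdisj : ∀ a b : I j, a ≠ b → Disjoint (F j a) (F j b)) (i : I j) :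
    F j i = ⋃ l ∈ succSet p j k i, F k l := by
  refine subset_antisymm (fun x hx => ?_) (Set.iUnion₂_subset fun l hl => mem_succSet.1 hl ▸ hp l)
  obtain ⟨l, hl⟩ := Set.mem_iUnion.1 (hcover ▸ Set.mem_univ x : x ∈ ⋃ l, F k l)
  refine Set.mem_biUnion (mem_succSet.2 ?_) hl
  exact Set.PairwiseDisjoint.elim_set (s := Set.univ) (fun a _ b _ => hdisj a b) trivial trivial
    x (hp l hl) hx

end Tree

lemma ae_mem_of_measure_eq_zero {ι : Type*} [Countable ι] {F : ι → Set E}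
    (hcover : ⋃ j, F j = Set.univ) {κ : Measure E} {i : ι} (h : ∀ j, j ≠ i → κ (F j) = 0) :
    ∀ᵐ y ∂κ, y ∈ F i := by
  refine measure_mono_null (fun y hy => ?_) (measure_iUnion_null fun j : {j // j ≠ i} => h j j.2)
  obtain ⟨j, hj⟩ := Set.mem_iUnion.1 (hcover ▸ Set.mem_univ y : y ∈ ⋃ j, F j)
  exact Set.mem_iUnion.2 ⟨⟨j, fun hji => hy (hji ▸ hj)⟩, hj⟩

section Propagator

variable {n : ℕ} {μ : ℕ → Measure E} {g : ℕ → E → ℝ} {K : ℕ → E → Measure E}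
  {qhat : ℕ → ℕ → (E → ℝ) → E → ℝ}

lemma qhat_succ_apply (hqdiag : ∀ k f, qhat k k f = f)
    (hqstep : ∀ j k, j < k → k ≤ n → ∀ (f : E → ℝ) (x : E),
      qhat j k f x = ∫ y, (g j y / (∫ z, g j z ∂(μ j))) * qhat (j+1) k f y ∂(K j x))
    {j : ℕ} (hjn : j < n) (f : E → ℝ) (x : E) :
    qhat j (j + 1) f x = ∫ y, (g j y / (∫ z, g j z ∂(μ j))) * f y ∂(K j x) := by
  rw [hqstep j (j + 1) j.lt_succ_self hjn, hqdiag]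

lemma qhat_eq_qhat_succ_comp (hqdiag : ∀ k f, qhat k k f = f)
    (hqstep : ∀ j k, j < k → k ≤ n → ∀ (f : E → ℝ) (x : E),
      qhat j k f x = ∫ y, (g j y / (∫ z, g j z ∂(μ j))) * qhat (j+1) k f y ∂(K j x))
    {j k : ℕ} (hjk : j < k) (hkn : k ≤ n) (f : E → ℝ) :
    qhat j k f = qhat j (j + 1) (qhat (j + 1) k f) :=
  funext fun x => by rw [hqstep j k hjk hkn, qhat_succ_apply hqdiag hqstep (hjk.trans_le hkn)]

lemma qhat_measurable_bdd (hgmeas : ∀ k, Measurable (g k)) (hgbdd : ∀ k, ∃ C, ∀ x, |g k x| ≤ C)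
    [∀ k x, IsProbabilityMeasure (K k x)]
    (hKmeas : ∀ k (A : Set E), MeasurableSet A → Measurable fun x => K k x A)
    (hqdiag : ∀ k f, qhat k k f = f)
    (hqstep : ∀ j k, j < k → k ≤ n → ∀ (f : E → ℝ) (x : E),
      qhat j k f x = ∫ y, (g j y / (∫ z, g j z ∂(μ j))) * qhat (j+1) k f y ∂(K j x))
    {j k : ℕ} (hjk : j ≤ k) (hkn : k ≤ n) {f : E → ℝ} (hf : Measurable f)
    (hfb : ∃ C, ∀ x, |f x| ≤ C) :
    Measurable (qhat j k f) ∧ ∃ C, ∀ x, |qhat j k f x| ≤ C := by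
  obtain ⟨d, rfl⟩ := Nat.exists_eq_add_of_le hjk
  induction d generalizing j with
  | zero => simpa only [Nat.add_zero, hqdiag] using ⟨hf, hfb⟩
  | succ d ih =>
    rw [show j + (d + 1) = j + 1 + d by omega] at hkn ⊢
    obtain ⟨hu, Cu, hCu⟩ := ih (j := j + 1) (by omega) hkn
    obtain ⟨Cg, hCg⟩ := hgbdd j
    have hw : ∀ y, |g j y / ∫ z, g j z ∂μ j| ≤ Cg / |∫ z, g j z ∂μ j| := fun y => by
      rw [abs_div]
      exact div_le_div_of_nonneg_right (hCg y) (abs_nonneg _)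
    rw [funext (hqstep j _ (by omega) hkn f)]
    exact ⟨measurable_integral_of_measurable_coe (hKmeas j) (((hgmeas j).div_const _).mul hu),
      _, abs_integral_le_of_abs_le (abs_mul_le_of_abs_le hw hCu)⟩

end Propagator

section Level

variable {μ : ℕ → Measure E} {g : ℕ → E → ℝ} {K : ℕ → E → Measure E} {F : ∀ k, I k → Set E}
  {qhat : ℕ → ℕ → (E → ℝ) → E → ℝ} {α β γ : ℝ}

omit [∀ k, Nonempty (I k)] [∀ k, DecidableEq (I k)] in
lemma locNorm_qhat_succ_rpow_le {j : ℕ} {i : I j} [IsFiniteMeasure (μ j)]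
    [IsFiniteMeasure (μ (j + 1))] (hcell : μ j (F j i) ≠ 0) (hcell' : μ (j + 1) (F j i) ≠ 0)
    (hgmeas : Measurable (g j)) (hgpos : ∀ x, 0 < g j x) (hgbdd : ∃ C : ℝ, ∀ x, g j x ≤ C)
    [∀ x, IsProbabilityMeasure (K j x)]
    (hKmeas : ∀ A : Set E, MeasurableSet A → Measurable fun x => K j x A)
    (hFmeas : MeasurableSet (F j i)) (hFdisj : ∀ a b : I j, a ≠ b → Disjoint (F j a) (F j b))
    (hFcover : ⋃ a : I j, F j a = Set.univ)
    (hD : ∀ (a : I j) (x : E), x ∉ F j a → K j x (F j a) = 0)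
    (hqhat : ∀ f x, qhat j (j + 1) f x = ∫ y, (g j y / ∫ z, g j z ∂μ j) * f y ∂K j x)
    (hM : ∀ f : E → ℝ, Measurable f → (∃ C : ℝ, ∀ x, |f x| ≤ C) →
      locNorm (muLoc (μ j) (F j i)) 2 (qhat j (j + 1) f) ^ 2
        ≤ mRatio μ F j i ^ 2 * (α * locNorm (muLoc (μ (j + 1)) (F j i)) 2 f ^ 2
          + β * (∫ x, f x ∂muLoc (μ (j + 1)) (F j i)) ^ 2))
    (hγ : 0 < γ) (hB : ∀ x ∈ F j i,
      ((μ j (F j i)).toReal / (μ (j + 1) (F j i)).toReal) * (g j x / ∫ z, g j z ∂μ j) ≤ γ)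
    {p : ℝ} (hp : 1 ≤ p) {h : E → ℝ} (hh : Measurable h) (hhb : ∃ C : ℝ, ∀ x, |h x| ≤ C) :
    locNorm (muLoc (μ j) (F j i)) (2 * p) (qhat j (j + 1) h) ^ (2 * p)
      ≤ γ ^ (2 * p - 2) *
        (α * (mRatio μ F j i * locNorm (muLoc (μ (j + 1)) (F j i)) (2 * p) h) ^ (2 * p)
          + β * (mRatio μ F j i * locNorm (muLoc (μ (j + 1)) (F j i)) p h) ^ (2 * p)) := by
  have hμ : 0 < (μ j (F j i)).toReal := ENNReal.toReal_pos hcell (measure_ne_top _ _)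
  have hμ' : 0 < (μ (j + 1) (F j i)).toReal := ENNReal.toReal_pos hcell' (measure_ne_top _ _)
  have hm : 0 < mRatio μ F j i := div_pos hμ' hμ
  have hZ : 0 ≤ ∫ z, g j z ∂μ j := integral_nonneg fun z => (hgpos z).le
  obtain ⟨Cg, hCg⟩ := hgbdd
  have hgbar : ∀ x ∈ F j i, g j x / ∫ z, g j z ∂μ j ≤ γ * mRatio μ F j i := fun x hx => by
    have := hB x hx
    rw [div_mul_eq_mul_div, div_le_iff₀ hμ'] at this
    rw [mRatio, ← mul_div_assoc, le_div_iff₀ hμ]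
    linarith
  have hKF : ∀ x ∈ F j i, ∀ᵐ y ∂K j x, y ∈ F j i := fun x hx =>
    ae_mem_of_measure_eq_zero hFcover fun a ha => hD a x fun hxa =>
      ha (Set.PairwiseDisjoint.elim_set (s := Set.univ) (fun a _ b _ => hFdisj a b) trivial
        trivial x hxa hx)
  have := isProbabilityMeasure_muLoc hcell (measure_ne_top _ _)
  obtain ⟨Ch, hCh⟩ := hhb
  have key := locNorm_rpow_le_of_sq_bound hKmeas (hgmeas.div_const _)
    (fun y => div_nonneg (hgpos y).le hZ) (fun y => div_le_div_of_nonneg_right (hCg y) hZ)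
    (mul_pos hγ hm) ((ae_muLoc_mem hFmeas).mono fun x hx => (hKF x hx).mono hgbar) hqhat hM hp
    hh hCh
  refine key.trans_eq ?_
  rw [Real.mul_rpow hm.le (locNorm_nonneg _ _ _), Real.mul_rpow hm.le (locNorm_nonneg _ _ _),
    Real.mul_rpow hγ.le hm.le, Real.rpow_sub hm, Real.rpow_two]
  field_simp

omit [∀ k, Nonempty (I k)] in
lemma locNorm_qhat_succ_le {n : ℕ} {p : ∀ j k : ℕ, I k → I j}
    (hμprob : ∀ k, k ≤ n → IsProbabilityMeasure (μ k))
    (hcell : ∀ m k, m ≤ n → k ≤ n → ∀ l : I k, μ m (F k l) ≠ 0)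
    (hgmeas : ∀ k, Measurable (g k)) (hgpos : ∀ k x, 0 < g k x)
    (hgbdd : ∀ k, ∃ C : ℝ, ∀ x, g k x ≤ C) (hKprob : ∀ k x, IsProbabilityMeasure (K k x))
    (hKmeas : ∀ k (A : Set E), MeasurableSet A → Measurable fun x => K k x A)
    (hFmeas : ∀ k j, MeasurableSet (F k j))
    (hFdisj : ∀ k, k ≤ n → ∀ j j' : I k, j ≠ j' → Disjoint (F k j) (F k j'))
    (hFcover : ∀ k, k ≤ n → (⋃ j : I k, F k j) = Set.univ)
    (hp : ∀ j k, j < k → k ≤ n → ∀ l : I k, F k l ⊆ F j (p j k l))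
    (hsne : ∀ (j k : ℕ) (_ : j < k) (_ : k ≤ n) (i : I j), (succSet p j k i).Nonempty)
    (hD : ∀ k, 1 ≤ k → k ≤ n → ∀ (j : I k) (x : E), x ∉ F k j → K k x (F k j) = 0)
    (hqdiag : ∀ k f, qhat k k f = f)
    (hqstep : ∀ j k, j < k → k ≤ n → ∀ (f : E → ℝ) (x : E),
      qhat j k f x = ∫ y, (g j y / (∫ z, g j z ∂(μ j))) * qhat (j+1) k f y ∂(K j x))
    (hα : 0 ≤ α) (hβ0 : 0 ≤ β) (hβ1 : β ≤ 1)
    (hM : ∀ k, 1 ≤ k → k < n → ∀ (i : I k) (f : E → ℝ),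
      Measurable f → (∃ C : ℝ, ∀ x, |f x| ≤ C) →
      (locNorm (muLoc (μ k) (F k i)) 2 (qhat k (k+1) f))^2
        ≤ (mRatio μ F k i)^2 *
            (α * (locNorm (muLoc (μ (k+1)) (F k i)) 2 f)^2
              + β * (∫ x, f x ∂(muLoc (μ (k+1)) (F k i)))^2))
    (hγ : 1 ≤ γ)
    (hB : ∀ k, k < n → ∀ (j : I k) (x : E), x ∈ F k j →
      ((μ k (F k j)).toReal / (μ (k+1) (F k j)).toReal)
        * (g k x / (∫ z, g k z ∂(μ k))) ≤ γ)
    {q δ : ℝ} (hq : 1 ≤ q) (hsmall : α * γ ^ (2 * q - 2) < 1) (hδ : 0 ≤ δ)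
    {j : ℕ} (hj : 1 ≤ j) (hjn : j < n) (i : I j) {h : E → ℝ} (hh : Measurable h)
    (hhb : ∃ C : ℝ, ∀ x, |h x| ≤ C) {Y : ℝ} (hY : 0 ≤ Y)
    (hYl : ∀ l ∈ succSet p j (j + 1) i,
      mRatio μ F j i * locNorm (muLoc (μ (j + 1)) (F (j + 1) l)) (2 * q) h
          ≤ doubledDelta α γ q δ * Y ∧
        mRatio μ F j i * locNorm (muLoc (μ (j + 1)) (F (j + 1) l)) q h ≤ δ * Y) :
    locNorm (muLoc (μ j) (F j i)) (2 * q) (qhat j (j + 1) h) ≤ doubledDelta α γ q δ * Y := by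
  have := hμprob j hjn.le
  have := hμprob (j + 1) hjn
  have hm := mRatio_nonneg μ F j i
  obtain ⟨C, hC⟩ := hhb
  have hsplit : ∀ r, 0 < r → ∀ Z, (∀ l ∈ succSet p j (j + 1) i,
      mRatio μ F j i * locNorm (muLoc (μ (j + 1)) (F (j + 1) l)) r h ≤ Z) →
      mRatio μ F j i * locNorm (muLoc (μ (j + 1)) (F j i)) r h ≤ Z := by
    intro r hr Z hZ
    obtain ⟨l, hl, hmax⟩ := Finset.exists_mem_eq_sup' (hsne j (j + 1) j.lt_succ_self hjn i)
      fun l => locNorm (muLoc (μ (j + 1)) (F (j + 1) l)) r h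
    refine le_trans (mul_le_mul_of_nonneg_left ?_ hm) (hZ l hl)
    rw [← hmax, cell_eq_biUnion_succSet (hFcover (j + 1) hjn) (hp j (j + 1) j.lt_succ_self hjn)
      (hFdisj j hjn.le) i]
    exact locNorm_muLoc_biUnion_le_sup' _ (fun l _ => hFmeas (j + 1) l)
      (fun a _ b _ => hFdisj (j + 1) hjn a b) (fun l _ => hcell (j + 1) (j + 1) hjn hjn l) hr
      (integrable_of_abs_le (hh.abs.pow_const r) (abs_rpow_le_of_abs_le hC hr.le)).integrableOn
  refine le_doubledDelta_mul_of_rpow_le hα hβ0 hβ1 (by linarith) (by linarith) hsmall hδ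
    (locNorm_nonneg _ _ _) (mul_nonneg hm (locNorm_nonneg _ _ _))
    (mul_nonneg hm (locNorm_nonneg _ _ _)) hY (hsplit _ (by linarith) _ fun l hl => (hYl l hl).1)
    (hsplit _ (by linarith) _ fun l hl => (hYl l hl).2) ?_
  exact locNorm_qhat_succ_rpow_le (hcell j j hjn.le hjn.le i) (hcell (j + 1) j hjn hjn.le i)
    (hgmeas j) (hgpos j) (hgbdd j) (hKmeas j) (hFmeas j i) (hFdisj j hjn.le) (hFcover j hjn.le)
    (hD j hj hjn.le) (qhat_succ_apply hqdiag hqstep hjn) (hM j hj hjn i) (by linarith)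
    (hB j hjn i) hq hh ⟨C, hC⟩

end Level

section Induction

variable {n : ℕ} {μ : ℕ → Measure E} {F : ∀ k, I k → Set E} {p : ∀ j k : ℕ, I k → I j}
  {qhat : ℕ → ℕ → (E → ℝ) → E → ℝ} {q δ δ' : ℝ}

omit [∀ k, Nonempty (I k)]

lemma locNorm_qhat_le_of_succ_le
    (hsne : ∀ (j k : ℕ) (_ : j < k) (_ : k ≤ n) (i : I j), (succSet p j k i).Nonempty)
    (hpc : ∀ j k, j + 1 < k → k ≤ n → ∀ l : I k, p j k l = p j (j + 1) (p (j + 1) k l))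
    (hcomp : ∀ j k, j < k → k ≤ n → ∀ f, qhat j k f = qhat j (j + 1) (qhat (j + 1) k f))
    (hbdd : ∀ j k, j ≤ k → k ≤ n → ∀ f : E → ℝ, Measurable f → (∃ C : ℝ, ∀ x, |f x| ≤ C) →
      Measurable (qhat j k f) ∧ ∃ C : ℝ, ∀ x, |qhat j k f x| ≤ C)
    (hmono : ∀ k, k ≤ n → ∀ (l : I k) (f : E → ℝ), Measurable f → (∃ C : ℝ, ∀ x, |f x| ≤ C) →
      locNorm (muLoc (μ k) (F k l)) q f ≤ locNorm (muLoc (μ k) (F k l)) (2 * q) f)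
    (hind : ∀ (j k : ℕ) (hjk : j < k) (hkn : k ≤ n), 1 ≤ j → ∀ (i : I j) (f : E → ℝ),
      Measurable f → (∃ C : ℝ, ∀ x, |f x| ≤ C) →
      locNorm (muLoc (μ j) (F j i)) q (qhat j k f)
        ≤ ((succSet p j k i).sup' (hsne j k hjk hkn i) (Mprod μ F p j k)) * δ
          * ((succSet p j k i).sup' (hsne j k hjk hkn i) fun l =>
              locNorm (muLoc (μ k) (F k l)) q f))
    (hstep : ∀ j, 1 ≤ j → j < n → ∀ (i : I j) (h : E → ℝ), Measurable h →
      (∃ C : ℝ, ∀ x, |h x| ≤ C) → ∀ Y, 0 ≤ Y →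
      (∀ l ∈ succSet p j (j + 1) i,
        mRatio μ F j i * locNorm (muLoc (μ (j + 1)) (F (j + 1) l)) (2 * q) h ≤ δ' * Y ∧
          mRatio μ F j i * locNorm (muLoc (μ (j + 1)) (F (j + 1) l)) q h ≤ δ * Y) →
      locNorm (muLoc (μ j) (F j i)) (2 * q) (qhat j (j + 1) h) ≤ δ' * Y)
    (hδ : 1 ≤ δ) (hδ' : 1 ≤ δ') {j k : ℕ} (hjk : j < k) (hkn : k ≤ n) (hj : 1 ≤ j)
    {f : E → ℝ} (hf : Measurable f) (hfb : ∃ C : ℝ, ∀ x, |f x| ≤ C) (i : I j) :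
    locNorm (muLoc (μ j) (F j i)) (2 * q) (qhat j k f)
      ≤ (succSet p j k i).sup' (hsne j k hjk hkn i) (Mprod μ F p j k) * δ'
        * (succSet p j k i).sup' (hsne j k hjk hkn i)
          fun l => locNorm (muLoc (μ k) (F k l)) (2 * q) f := by
  have hXnonneg : ∀ j k (hjk : j < k) (hkn : k ≤ n) (i : I j) r,
      0 ≤ (succSet p j k i).sup' (hsne j k hjk hkn i)
        fun l => locNorm (muLoc (μ k) (F k l)) r f := fun j k hjk hkn i r =>
    let ⟨_, hl⟩ := hsne j k hjk hkn i
    Finset.le_sup'_of_le _ hl (locNorm_nonneg _ _ _)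
  obtain ⟨d, hd⟩ : ∃ d, k = j + 1 + d := ⟨k - (j + 1), by omega⟩
  induction d generalizing j with
  | zero =>
    obtain rfl : k = j + 1 := hd
    have hm := mRatio_nonneg μ F j i
    have hX := hXnonneg _ _ hjk hkn i (2 * q)
    rw [sup'_Mprod_succ, mul_right_comm _ δ', mul_comm _ δ']
    refine hstep j hj hkn i f hf hfb _ (mul_nonneg hm hX) fun l hl => ?_
    have hfl := Finset.le_sup' (fun l => locNorm (muLoc (μ (j + 1)) (F (j + 1) l)) (2 * q) f) hl
    exact ⟨(mul_le_mul_of_nonneg_left hfl hm).trans (le_mul_of_one_le_left (by positivity) hδ'),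
      (mul_le_mul_of_nonneg_left ((hmono _ hkn l f hf hfb).trans hfl) hm).trans
        (le_mul_of_one_le_left (by positivity) hδ)⟩
  | succ d ih =>
    have hjk1 : j + 1 < k := by omega
    have hm := mRatio_nonneg μ F j i
    have hpck := hpc j k hjk1 hkn
    obtain ⟨hh, hhb⟩ := hbdd (j + 1) k (by omega) hkn f hf hfb
    rw [hcomp j k hjk hkn f, mul_right_comm _ δ', mul_comm _ δ']
    refine hstep j hj (by omega) i _ hh hhb _
      (mul_nonneg (sup'_Mprod_nonneg _) (hXnonneg _ _ hjk hkn i _)) fun l₁ hl₁ => ?_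
    have hsub := succSet_subset_succSet hpck hl₁
    have hM₁ := sup'_Mprod_nonneg (μ := μ) (F := F) (hsne _ _ hjk1 hkn l₁)
    have hX₁ := hXnonneg _ _ hjk1 hkn l₁
    have hM := mRatio_mul_sup'_Mprod_le (μ := μ) (F := F) hjk hpck hl₁
      (hsne (j + 1) k hjk1 hkn l₁) (hsne j k hjk hkn i)
    refine ⟨mul_le_mul_mul_of_le_mul_mul hm hM₁ (by linarith) (hX₁ _)
      (ih hjk1 (by omega) l₁ (by omega)) hM (Finset.sup'_mono _ hsub _),
      mul_le_mul_mul_of_le_mul_mul hm hM₁ (by linarith) (hX₁ _)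
        (hind (j + 1) k hjk1 hkn (by omega) l₁ f hf hfb) hM (Finset.sup'_le _ _ fun l hl => ?_)⟩
    exact (hmono k hkn l f hf hfb).trans
      (Finset.le_sup' (fun l => locNorm (muLoc (μ k) (F k l)) (2 * q) f) (hsub hl))

end Induction

omit [∀ k, DecidableEq (I k)] in
lemma maxNorm_le_of_locNorm_le {μ : ℕ → Measure E} {F : ∀ k, I k → Set E} {j k : ℕ} {r δ : ℝ}
    (hδ : 0 ≤ δ) {M : I j → ℝ} (hM : ∀ i, 0 ≤ M i) {s : I j → Finset (I k)}
    (hs : ∀ i, (s i).Nonempty) {u v : E → ℝ}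
    (h : ∀ i, locNorm (muLoc (μ j) (F j i)) r u
      ≤ M i * δ * (s i).sup' (hs i) fun l => locNorm (muLoc (μ k) (F k l)) r v) :
    maxNorm μ F j r u ≤ Finset.univ.sup' Finset.univ_nonempty M * δ * maxNorm μ F k r v := by
  refine Finset.sup'_le _ _ fun i _ => (h i).trans ?_
  have hX : ((s i).sup' (hs i) fun l => locNorm (muLoc (μ k) (F k l)) r v) ≤ maxNorm μ F k r v :=
    Finset.sup'_le _ _ fun l _ => Finset.le_sup' (fun l => locNorm (muLoc (μ k) (F k l)) r v)
      (Finset.mem_univ l)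
  have hX0 : 0 ≤ maxNorm μ F k r v :=
    (locNorm_nonneg _ _ _).trans (Finset.le_sup' (fun l => locNorm (muLoc (μ k) (F k l)) r v)
      (Finset.mem_univ (Classical.arbitrary _)))
  calc _ ≤ M i * δ * maxNorm μ F k r v := mul_le_mul_of_nonneg_left hX (mul_nonneg (hM i) hδ)
    _ ≤ _ := by gcongr; exact Finset.le_sup' M (Finset.mem_univ i)

theorem stmt_16_general
    (n : ℕ) (μ : ℕ → Measure E)
    (hμprob : ∀ k, k ≤ n → IsProbabilityMeasure (μ k))
    (hμac : ∀ j k, j ≤ n → k ≤ n → μ j ≪ μ k)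
    (g : ℕ → E → ℝ)
    (hgmeas : ∀ k, Measurable (g k))
    (hgpos : ∀ k x, 0 < g k x)
    (hgbdd : ∀ k, ∃ C : ℝ, ∀ x, g k x ≤ C)
    (K : ℕ → E → Measure E)
    (hKprob : ∀ k x, IsProbabilityMeasure (K k x))
    (hKmeas : ∀ k (A : Set E), MeasurableSet A → Measurable fun x => K k x A)
    (F : ∀ k, I k → Set E)
    (hFmeas : ∀ k j, MeasurableSet (F k j))
    (hFpos : ∀ k, k ≤ n → ∀ j, 0 < μ 0 (F k j))
    (hFdisj : ∀ k, k ≤ n → ∀ j j' : I k, j ≠ j' → Disjoint (F k j) (F k j'))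
    (hFcover : ∀ k, k ≤ n → (⋃ j : I k, F k j) = Set.univ)
    (p : ∀ j k : ℕ, I k → I j)
    (hp : ∀ j k, j < k → k ≤ n → ∀ l : I k, F k l ⊆ F j (p j k l))
    (hsne : ∀ (j k : ℕ) (_ : j < k) (_ : k ≤ n) (i : I j), (succSet p j k i).Nonempty)
    (hD : ∀ k, 1 ≤ k → k ≤ n → ∀ (j : I k) (x : E), x ∉ F k j → K k x (F k j) = 0)
    (qhat : ℕ → ℕ → (E → ℝ) → E → ℝ)
    (hqdiag : ∀ k f, qhat k k f = f)
    (hqstep : ∀ j k, j < k → k ≤ n → ∀ (f : E → ℝ) (x : E),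
      qhat j k f x = ∫ y, (g j y / (∫ z, g j z ∂(μ j))) * qhat (j+1) k f y ∂(K j x))
    (α β : ℝ) (hα : 0 < α) (hβ0 : 0 ≤ β) (hβ1 : β ≤ 1)
    (hM : ∀ k, 1 ≤ k → k < n → ∀ (i : I k) (f : E → ℝ),
      Measurable f → (∃ C : ℝ, ∀ x, |f x| ≤ C) →
      (locNorm (muLoc (μ k) (F k i)) 2 (qhat k (k+1) f))^2
        ≤ (mRatio μ F k i)^2 *
            (α * (locNorm (muLoc (μ (k+1)) (F k i)) 2 f)^2
              + β * (∫ x, f x ∂(muLoc (μ (k+1)) (F k i)))^2))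
    (γ : ℝ) (hγ : 1 ≤ γ)
    (hB : ∀ k, k < n → ∀ (j : I k) (x : E), x ∈ F k j →
      ((μ k (F k j)).toReal / (μ (k+1) (F k j)).toReal)
        * (g k x / (∫ z, g k z ∂(μ k))) ≤ γ)
    (preal : ℝ) (hpreal : 1 ≤ preal)
    (hsmall : α * γ ^ (2*preal - 2) < 1)
    (δp : ℝ) (hδp : 1 ≤ δp)
    (hind : ∀ (j k : ℕ) (hjk : j < k) (hkn : k ≤ n), 1 ≤ j → ∀ (i : I j) (f : E → ℝ),
      Measurable f → (∃ C : ℝ, ∀ x, |f x| ≤ C) →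
      locNorm (muLoc (μ j) (F j i)) preal (qhat j k f)
        ≤ ((succSet p j k i).sup' (hsne j k hjk hkn i) (Mprod μ F p j k)) * δp
          * ((succSet p j k i).sup' (hsne j k hjk hkn i) fun l =>
              locNorm (muLoc (μ k) (F k l)) preal f)) :
    ∀ (j k : ℕ) (hjk : j < k) (hkn : k ≤ n), 1 ≤ j → ∀ f : E → ℝ, Measurable f → (∃ C : ℝ, ∀ x, |f x| ≤ C) →
      (∀ i : I j,
        locNorm (muLoc (μ j) (F j i)) (2*preal) (qhat j k f)
          ≤ ((succSet p j k i).sup' (hsne j k hjk hkn i) (Mprod μ F p j k))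
            * (δp * γ ^ (1 - 1/preal) / (1 - α * γ ^ (2*preal - 2)) ^ (1/(2*preal)))
            * ((succSet p j k i).sup' (hsne j k hjk hkn i) fun l =>
                locNorm (muLoc (μ k) (F k l)) (2*preal) f))
      ∧ maxNorm μ F j (2*preal) (qhat j k f)
          ≤ (Finset.univ.sup' Finset.univ_nonempty fun i : I j =>
              (succSet p j k i).sup' (hsne j k hjk hkn i) (Mprod μ F p j k))
            * (δp * γ ^ (1 - 1/preal) / (1 - α * γ ^ (2*preal - 2)) ^ (1/(2*preal)))
            * maxNorm μ F k (2*preal) f := by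
  intro j k hjk hkn hj f hf hfb
  have hcell : ∀ m k, m ≤ n → k ≤ n → ∀ l : I k, μ m (F k l) ≠ 0 := fun m k hm hk l h0 =>
    (hFpos k hk l).ne' (hμac 0 m (Nat.zero_le n) hm h0)
  have hgabs : ∀ k, ∃ C : ℝ, ∀ x, |g k x| ≤ C := fun k =>
    (hgbdd k).imp fun C hC x => (abs_of_pos (hgpos k x)).trans_le (hC x)
  have hδ2 : δp ≤ doubledDelta α γ preal δp :=
    le_doubledDelta hα.le hγ hpreal hsmall (by linarith)
  have hlocal := fun i => locNorm_qhat_le_of_succ_le (δ' := doubledDelta α γ preal δp) hsne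
    (fun j k hjk hkn l => pred_eq_pred_succ_pred hjk hkn hp (hFdisj j (by omega))
      (nonempty_of_measure_ne_zero (hFpos k hkn l).ne'))
    (fun j k hjk hkn => qhat_eq_qhat_succ_comp hqdiag hqstep hjk hkn)
    (fun j k hjk hkn f hf hfb =>
      qhat_measurable_bdd hgmeas hgabs hKmeas hqdiag hqstep hjk hkn hf hfb)
    (fun k hk l f hf hfb => have := hμprob k hk
      locNorm_muLoc_le_of_exponent_le (hcell k k hk hk l) (by linarith) (by linarith) hf hfb)
    hind
    (fun j hj hjn i h hh hhb Y hY hYl => locNorm_qhat_succ_le hμprob hcell hgmeas hgpos hgbdd hKprob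
      hKmeas hFmeas hFdisj hFcover hp hsne hD hqdiag hqstep hα.le hβ0 hβ1 hM hγ hB hpreal hsmall
      (by linarith) hj hjn i hh hhb hY hYl)
    hδp (hδp.trans hδ2) hjk hkn hj hf hfb i
  exact ⟨hlocal, maxNorm_le_of_locNorm_le (zero_le_one.trans (hδp.trans hδ2))
    (fun i => sup'_Mprod_nonneg _) _ hlocal⟩

theorem stmt_16
    (n : ℕ) (μ : ℕ → Measure E)
    (hμprob : ∀ k, k ≤ n → IsProbabilityMeasure (μ k))
    (hμac : ∀ j k, j ≤ n → k ≤ n → μ j ≪ μ k)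
    (g : ℕ → E → ℝ)
    (hgmeas : ∀ k, Measurable (g k))
    (hgpos : ∀ k x, 0 < g k x)
    (hgbdd : ∀ k, ∃ C : ℝ, ∀ x, g k x ≤ C)
    (hgdens : ∀ k, k < n → ∀ f : E → ℝ, Measurable f → (∃ C : ℝ, ∀ x, |f x| ≤ C) →
      (∫ x, f x ∂(μ (k+1))) = (∫ x, f x * g k x ∂(μ k)) / (∫ x, g k x ∂(μ k)))
    (K : ℕ → E → Measure E)
    (hKprob : ∀ k x, IsProbabilityMeasure (K k x))
    (hKmeas : ∀ k (A : Set E), MeasurableSet A → Measurable fun x => K k x A)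
    (hKinv : ∀ k, k ≤ n → (μ k).bind (K k) = μ k)
    (F : ∀ k, I k → Set E)
    (hFmeas : ∀ k j, MeasurableSet (F k j))
    (hFpos : ∀ k, k ≤ n → ∀ j, 0 < μ 0 (F k j))
    (hFdisj : ∀ k, k ≤ n → ∀ j j' : I k, j ≠ j' → Disjoint (F k j) (F k j'))
    (hFcover : ∀ k, k ≤ n → (⋃ j : I k, F k j) = Set.univ)
    (p : ∀ j k : ℕ, I k → I j)
    (hp : ∀ j k, j < k → k ≤ n → ∀ l : I k, F k l ⊆ F j (p j k l))
    (hsne : ∀ (j k : ℕ) (_ : j < k) (_ : k ≤ n) (i : I j), (succSet p j k i).Nonempty)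
    (hD : ∀ k, 1 ≤ k → k ≤ n → ∀ (j : I k) (x : E), x ∉ F k j → K k x (F k j) = 0)
    (qhat : ℕ → ℕ → (E → ℝ) → E → ℝ)
    (hqdiag : ∀ k f, qhat k k f = f)
    (hqstep : ∀ j k, j < k → k ≤ n → ∀ (f : E → ℝ) (x : E),
      qhat j k f x = ∫ y, (g j y / (∫ z, g j z ∂(μ j))) * qhat (j+1) k f y ∂(K j x))
    (α β : ℝ) (hα : 0 < α) (hβ0 : 0 ≤ β) (hβ1 : β ≤ 1)
    (hM : ∀ k, 1 ≤ k → k < n → ∀ (i : I k) (f : E → ℝ),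
      Measurable f → (∃ C : ℝ, ∀ x, |f x| ≤ C) →
      (locNorm (muLoc (μ k) (F k i)) 2 (qhat k (k+1) f))^2
        ≤ (mRatio μ F k i)^2 *
            (α * (locNorm (muLoc (μ (k+1)) (F k i)) 2 f)^2
              + β * (∫ x, f x ∂(muLoc (μ (k+1)) (F k i)))^2))
    (γ : ℝ) (hγ : 1 ≤ γ)
    (hB : ∀ k, k < n → ∀ (j : I k) (x : E), x ∈ F k j →
      ((μ k (F k j)).toReal / (μ (k+1) (F k j)).toReal)
        * (g k x / (∫ z, g k z ∂(μ k))) ≤ γ)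
    (preal : ℝ) (hpreal : 1 ≤ preal)
    (hsmall : α * γ ^ (2*preal - 2) < 1)
    (δp : ℝ) (hδp : 1 ≤ δp)
    (hind : ∀ (j k : ℕ) (hjk : j < k) (hkn : k ≤ n), 1 ≤ j → ∀ (i : I j) (f : E → ℝ),
      Measurable f → (∃ C : ℝ, ∀ x, |f x| ≤ C) →
      locNorm (muLoc (μ j) (F j i)) preal (qhat j k f)
        ≤ ((succSet p j k i).sup' (hsne j k hjk hkn i) (Mprod μ F p j k)) * δp
          * ((succSet p j k i).sup' (hsne j k hjk hkn i) fun l =>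
              locNorm (muLoc (μ k) (F k l)) preal f)) :
    ∀ (j k : ℕ) (hjk : j < k) (hkn : k ≤ n), 1 ≤ j → ∀ f : E → ℝ, Measurable f → (∃ C : ℝ, ∀ x, |f x| ≤ C) →
      (∀ i : I j,
        locNorm (muLoc (μ j) (F j i)) (2*preal) (qhat j k f)
          ≤ ((succSet p j k i).sup' (hsne j k hjk hkn i) (Mprod μ F p j k))
            * (δp * γ ^ (1 - 1/preal) / (1 - α * γ ^ (2*preal - 2)) ^ (1/(2*preal)))
            * ((succSet p j k i).sup' (hsne j k hjk hkn i) fun l =>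
                locNorm (muLoc (μ k) (F k l)) (2*preal) f))
      ∧ maxNorm μ F j (2*preal) (qhat j k f)
          ≤ (Finset.univ.sup' Finset.univ_nonempty fun i : I j =>
              (succSet p j k i).sup' (hsne j k hjk hkn i) (Mprod μ F p j k))
            * (δp * γ ^ (1 - 1/preal) / (1 - α * γ ^ (2*preal - 2)) ^ (1/(2*preal)))
            * maxNorm μ F k (2*preal) f :=
  stmt_16_general n μ hμprob hμac g hgmeas hgpos hgbdd K hKprob hKmeas F hFmeas hFpos hFdisj hFcover
    p hp hsne hD qhat hqdiag hqstep α β hα hβ0 hβ1 hM γ hγ hB preal hpreal hsmall δp hδp hind
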